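/- Let A and B be symmetric linear operators in a real or complex Hilbert space H, and let 𝒟 be a dense subspace of H contained in the domains of A, B, AB, BA, A², and B², such that A B x = B A x for all x ∈ 𝒟. If the restriction of A² + B² to 𝒟 is essentially selfadjoint, then the restrictions of A and B to 𝒟 are essentially selfadjoint, and moreover for all real numbers a, b the restriction of a A + b B to 𝒟 is essentially selfadjoint. -/

import Mathlib

/-!
Put `C = A² + B²` and `T = aA + bB` on `𝒟`. There `‖T x‖² ≤ (a² + b²) ⟪C x, x⟫`, and since `A` and
`B` commute on `𝒟`, `⟪T x, C y⟫ = ⟪C x, T y⟫`. The estimate makes `T` relatively bounded with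
respect to `C`, so the closure `T̄` is defined on the domain of the nonnegative selfadjoint operator
`N = C̄` and still commutes weakly with `N` there. For `u ∈ dom T̄*` the resolvents
`R t = (1 + tN)⁻¹` then satisfy `T̄ (R t u) = R t (T̄* u)`; as `t → 0⁺`, `R t → 1` strongly, and
since `T̄` is closed, `u ∈ dom T̄` with `T̄ u = T̄* u`. The operators `A` and `B` are the cases
`(a, b) = (1, 0)` and `(0, 1)`.
-/

open LinearPMap

/-- The product (composition) `A ∘ B` of two partially defined linear operators,
with domain `{x ∈ dom B : B x ∈ dom A}`, defined via its graph. -/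
noncomputable def LinearPMap.pcomp {R E F G : Type*} [Ring R] [AddCommGroup E] [Module R E]
    [AddCommGroup F] [Module R F] [AddCommGroup G] [Module R G]
    (A : F →ₗ.[R] G) (B : E →ₗ.[R] F) : E →ₗ.[R] G :=
  Submodule.toLinearPMap
    { carrier := {p : E × G | ∃ y : F, (p.1, y) ∈ B.graph ∧ (y, p.2) ∈ A.graph}
      add_mem' := fun ⟨y, hy1, hy2⟩ ⟨z, hz1, hz2⟩ =>
        ⟨y + z, B.graph.add_mem hy1 hz1, A.graph.add_mem hy2 hz2⟩
      zero_mem' := ⟨0, B.graph.zero_mem, A.graph.zero_mem⟩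
      smul_mem' := fun c _ ⟨y, hy1, hy2⟩ =>
        ⟨c • y, B.graph.smul_mem c hy1, A.graph.smul_mem c hy2⟩ }

/-- The `n`-th power of a partially defined linear operator, with its natural domain:
`A⁰ = I` on all of `E` and `dom Aⁿ⁺¹ = {x ∈ dom Aⁿ : Aⁿ x ∈ dom A}`. -/
noncomputable def LinearPMap.ppow {R E : Type*} [Ring R] [AddCommGroup E] [Module R E]
    (A : E →ₗ.[R] E) : ℕ → E →ₗ.[R] E
  | 0 => (LinearMap.id : E →ₗ[R] E).toPMap ⊤
  | n + 1 => A.pcomp (A.ppow n)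

/-- A partially defined operator `A` in a Hilbert space is symmetric if
`⟪A x, y⟫ = ⟪x, A y⟫` for all `x, y` in its domain. -/
def LinearPMap.IsSymmetricOp {𝕜 H : Type*} [RCLike 𝕜] [NormedAddCommGroup H]
    [InnerProductSpace 𝕜 H] (A : H →ₗ.[𝕜] H) : Prop :=
  ∀ x y : A.domain, inner (𝕜 := 𝕜) (A x) (y : H) = inner (𝕜 := 𝕜) (x : H) (A y)

/-- A partially defined operator `A` in a Hilbert space is selfadjoint if it is densely
defined and `A* = A`. -/
def LinearPMap.IsSelfAdjointOp {𝕜 H : Type*} [RCLike 𝕜] [NormedAddCommGroup H]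
    [InnerProductSpace 𝕜 H] [CompleteSpace H] (A : H →ₗ.[𝕜] H) : Prop :=
  Dense (A.domain : Set H) ∧ A.adjoint = A

/-- An operator `A` in a Hilbert space is essentially selfadjoint if it is closable and its
closure is a densely defined selfadjoint operator. -/
def LinearPMap.IsEssSelfAdjointOp {𝕜 H : Type*} [RCLike 𝕜] [NormedAddCommGroup H]
    [InnerProductSpace 𝕜 H] [CompleteSpace H] (A : H →ₗ.[𝕜] H) : Prop :=
  A.IsClosable ∧ Dense (A.closure.domain : Set H) ∧ A.closure.adjoint = A.closure

open Filter Topology RCLike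

theorem norm_ofReal_smul_add_ofReal_smul_sq_le {𝕜 E : Type*} [RCLike 𝕜] [NormedAddCommGroup E]
    [NormedSpace 𝕜 E] (a b : ℝ) (u v : E) :
    ‖(a : 𝕜) • u + (b : 𝕜) • v‖ ^ 2 ≤ (a ^ 2 + b ^ 2) * (‖u‖ ^ 2 + ‖v‖ ^ 2) := by
  have h := norm_add_le ((a : 𝕜) • u) ((b : 𝕜) • v)
  rw [norm_smul, norm_smul, RCLike.norm_ofReal, RCLike.norm_ofReal] at h
  calc ‖(a : 𝕜) • u + (b : 𝕜) • v‖ ^ 2 ≤ (|a| * ‖u‖ + |b| * ‖v‖) ^ 2 :=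
        pow_le_pow_left₀ (norm_nonneg _) h 2
    _ ≤ (a ^ 2 + b ^ 2) * (‖u‖ ^ 2 + ‖v‖ ^ 2) := by
        nlinarith [sq_nonneg (|a| * ‖v‖ - |b| * ‖u‖), sq_abs a, sq_abs b]

theorem norm_le_sqrt_mul_norm_prod_of_sq_norm_le {𝕜 E G : Type*} [RCLike 𝕜]
    [NormedAddCommGroup E] [InnerProductSpace 𝕜 E] [NormedAddCommGroup G] {a : G} {x y : E} {c : ℝ}
    (h : ‖a‖ ^ 2 ≤ c * re (inner 𝕜 y x)) : ‖a‖ ≤ √|c| * ‖(x, y)‖ := by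
  rw [← Real.sqrt_sq (norm_nonneg (x, y)), ← Real.sqrt_mul (abs_nonneg c)]
  refine (Real.le_sqrt (norm_nonneg _) (by positivity)).mpr ?_
  calc ‖a‖ ^ 2 ≤ |c * re (inner 𝕜 y x)| := h.trans (le_abs_self _)
    _ ≤ |c| * (‖y‖ * ‖x‖) := by
      rw [abs_mul]
      gcongr
      exact (abs_re_le_norm _).trans (norm_inner_le_norm _ _)
    _ ≤ |c| * ‖(x, y)‖ ^ 2 := by
      rw [sq]
      gcongr
      exacts [norm_snd_le (x, y), norm_fst_le (x, y)]

namespace LinearPMap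

section Algebra

variable {R E F G : Type*} [Ring R] [AddCommGroup E] [Module R E] [AddCommGroup F] [Module R F]
  [AddCommGroup G] [Module R G]

theorem domRestrict_eq_domRestrict {f g : E →ₗ.[R] F} {p : Submodule R E} (hf : p ≤ f.domain)
    (hg : p ≤ g.domain) (h : ∀ x : p, f ⟨x, hf x.2⟩ = g ⟨x, hg x.2⟩) :
    f.domRestrict p = g.domRestrict p :=
  ext (by rw [domRestrict_domain, domRestrict_domain, inf_eq_left.mpr hf, inf_eq_left.mpr hg])
    fun x hx _ => h ⟨x, hx.1⟩

variable {A : F →ₗ.[R] G} {B : E →ₗ.[R] F}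

theorem mem_graph_pcomp_iff {p : E × G} :
    p ∈ (A.pcomp B).graph ↔ ∃ y, (p.1, y) ∈ B.graph ∧ (y, p.2) ∈ A.graph := by
  rw [pcomp, Submodule.toLinearPMap_graph_eq]
  · rfl
  rintro ⟨x, z⟩ ⟨y, hxy, hyz⟩ (rfl : x = 0)
  obtain rfl : y = 0 := B.graph_fst_eq_zero_snd hxy rfl
  exact A.graph_fst_eq_zero_snd hyz rfl

theorem pcomp_domain_le : (A.pcomp B).domain ≤ B.domain := fun x hx => by
  obtain ⟨z, hz⟩ := mem_domain_iff.mp hx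
  obtain ⟨y, hxy, -⟩ := mem_graph_pcomp_iff.mp hz
  exact mem_domain_of_mem_graph hxy

theorem apply_pcomp_mem_graph (x : (A.pcomp B).domain) :
    (B ⟨x, pcomp_domain_le x.2⟩, A.pcomp B x) ∈ A.graph := by
  obtain ⟨y, hxy, hyz⟩ := mem_graph_pcomp_iff.mp ((A.pcomp B).mem_graph x)
  rwa [← (image_iff _).mpr hxy]

end Algebra

section Closure

variable {𝕜 E F G : Type*} [NontriviallyNormedField 𝕜] [NormedAddCommGroup E] [NormedSpace 𝕜 E]
  [NormedAddCommGroup F] [NormedSpace 𝕜 F] [NormedAddCommGroup G] [NormedSpace 𝕜 G]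
  {f : E →ₗ.[𝕜] F}

theorem IsClosable.exists_seq_tendsto (hf : f.IsClosable) (x : f.closure.domain) :
    ∃ d : ℕ → f.domain,
      Tendsto (fun n => ((d n : E), f (d n))) atTop (𝓝 ((x : E), f.closure x)) := by
  have hx : ((x : E), f.closure x) ∈ _root_.closure (f.graph : Set (E × F)) := by
    rw [← Submodule.topologicalClosure_coe, hf.graph_closure_eq_closure_graph]
    exact f.closure.mem_graph x
  obtain ⟨p, hp, hlim⟩ := mem_closure_iff_seq_limit.mp hx
  choose d hd using fun n => f.mem_graph_iff'.mp (hp n)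
  exact ⟨d, by simpa only [hd] using hlim⟩

theorem IsClosable.dense_domain_of_dense_closure (hf : f.IsClosable)
    (h : Dense (f.closure.domain : Set E)) : Dense (f.domain : Set E) := by
  refine dense_closure.mp (h.mono fun x hx => ?_)
  obtain ⟨d, hd⟩ := hf.exists_seq_tendsto ⟨x, hx⟩
  exact mem_closure_of_tendsto hd.fst_nhds (Eventually.of_forall fun n => (d n).2)

theorem IsClosable.exists_tendsto_closure_of_norm_le [CompleteSpace G] {T : E →ₗ.[𝕜] G}
    {C : E →ₗ.[𝕜] F} (hT : T.IsClosable) (hCT : C.domain ≤ T.domain) {K : ℝ}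
    (hbound : ∀ x : C.domain, ‖T ⟨x, hCT x.2⟩‖ ≤ K * ‖((x : E), C x)‖)
    {d : ℕ → C.domain} {u : E} {v : F}
    (hd : Tendsto (fun n => ((d n : E), C (d n))) atTop (𝓝 (u, v))) :
    ∃ hu : u ∈ T.closure.domain,
      Tendsto (fun n => T ⟨d n, hCT (d n).2⟩) atTop (𝓝 (T.closure ⟨u, hu⟩)) := by
  have hcauchy : CauchySeq fun n => T ⟨d n, hCT (d n).2⟩ := by
    refine cauchySeq_iff_tendsto_dist_atTop_0.mpr (squeeze_zero (fun _ => dist_nonneg)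
      (fun p => ?_) (by simpa using
        (cauchySeq_iff_tendsto_dist_atTop_0.mp hd.cauchySeq).const_mul K))
    have hsub : T ⟨(d p.1 - d p.2 : C.domain), hCT (d p.1 - d p.2).2⟩
        = T ⟨d p.1, hCT (d p.1).2⟩ - T ⟨d p.2, hCT (d p.2).2⟩ := by
      rw [← T.map_sub]; rfl
    have h := hbound (d p.1 - d p.2)
    rw [hsub, C.map_sub, Submodule.coe_sub, ← Prod.mk_sub_mk] at h
    simpa only [dist_eq_norm] using h
  obtain ⟨w, hw⟩ := cauchySeq_tendsto_of_complete hcauchy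
  have hmem : (u, w) ∈ T.closure.graph := by
    rw [← hT.graph_closure_eq_closure_graph, ← SetLike.mem_coe, Submodule.topologicalClosure_coe]
    exact mem_closure_of_tendsto (hd.fst_nhds.prodMk_nhds hw)
      (Eventually.of_forall fun n => T.mem_graph ⟨d n, hCT (d n).2⟩)
  obtain ⟨x, rfl, hx⟩ := T.closure.mem_graph_iff.mp hmem
  exact ⟨x.2, hx ▸ hw⟩

end Closure

section Hilbert

variable {𝕜 H : Type*} [RCLike 𝕜] [NormedAddCommGroup H] [InnerProductSpace 𝕜 H]
  {A B C N S T : H →ₗ.[𝕜] H} {t : ℝ}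

local notation "⟪" x ", " y "⟫" => inner 𝕜 x y

def IsNonneg (T : H →ₗ.[𝕜] H) : Prop :=
  ∀ x : T.domain, 0 ≤ re ⟪T x, (x : H)⟫

theorem IsSymmetricOp.inner_eq_of_mem_graph (hA : A.IsSymmetricOp) {x x' y y' : H}
    (hx : (x, x') ∈ A.graph) (hy : (y, y') ∈ A.graph) : ⟪x', y⟫ = ⟪x, y'⟫ := by
  obtain ⟨u, rfl, rfl⟩ := A.mem_graph_iff.mp hx
  obtain ⟨v, rfl, rfl⟩ := A.mem_graph_iff.mp hy
  exact hA u v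

theorem IsSymmetricOp.add (hA : A.IsSymmetricOp) (hB : B.IsSymmetricOp) :
    (A + B).IsSymmetricOp := fun x y =>
  calc ⟪A ⟨x, x.2.1⟩ + B ⟨x, x.2.2⟩, (y : H)⟫
      = ⟪(x : H), A ⟨y, y.2.1⟩⟫ + ⟪(x : H), B ⟨y, y.2.2⟩⟫ := by
        rw [inner_add_left, hA ⟨x, x.2.1⟩ ⟨y, y.2.1⟩, hB ⟨x, x.2.2⟩ ⟨y, y.2.2⟩]
    _ = ⟪(x : H), A ⟨y, y.2.1⟩ + B ⟨y, y.2.2⟩⟫ := (inner_add_right _ _ _).symm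

theorem IsSymmetricOp.ofReal_smul (hA : A.IsSymmetricOp) (a : ℝ) :
    ((a : 𝕜) • A).IsSymmetricOp := fun x y => by
  simp only [smul_apply, inner_smul_left, inner_smul_right, conj_ofReal]
  rw [hA]

theorem IsSymmetricOp.domRestrict (hA : A.IsSymmetricOp) (S : Submodule 𝕜 H) :
    (A.domRestrict S).IsSymmetricOp := fun x y => hA ⟨x, x.2.2⟩ ⟨y, y.2.2⟩

theorem IsSymmetricOp.re_inner_pcomp_self (hA : A.IsSymmetricOp) (x : (A.pcomp A).domain) :
    re ⟪A.pcomp A x, (x : H)⟫ = ‖A ⟨x, pcomp_domain_le x.2⟩‖ ^ 2 := by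
  have h : ⟪A.pcomp A x, (x : H)⟫ = ⟪A ⟨x, pcomp_domain_le x.2⟩, A ⟨x, pcomp_domain_le x.2⟩⟫ :=
    hA.inner_eq_of_mem_graph (apply_pcomp_mem_graph x) (A.mem_graph ⟨x, pcomp_domain_le x.2⟩)
  rw [h, inner_self_eq_norm_sq]

theorem IsSymmetricOp.isNonneg_pcomp_self (hA : A.IsSymmetricOp) : (A.pcomp A).IsNonneg :=
  fun x => hA.re_inner_pcomp_self x ▸ sq_nonneg _

theorem IsNonneg.add (hA : A.IsNonneg) (hB : B.IsNonneg) : (A + B).IsNonneg := fun x => by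
  have h := add_nonneg (hA ⟨x, x.2.1⟩) (hB ⟨x, x.2.2⟩)
  rwa [← _root_.map_add, ← inner_add_left] at h

theorem IsNonneg.domRestrict (hA : A.IsNonneg) (S : Submodule 𝕜 H) :
    (A.domRestrict S).IsNonneg := fun x => hA ⟨x, x.2.2⟩

-- Read `xa, xb, xab, xbb` as `A x, B x, A B x = B A x, B² x`.
theorem IsSymmetricOp.inner_comm_of_mem_graph (hA : A.IsSymmetricOp) (hB : B.IsSymmetricOp)
    {xa xb xab xbb ya yb yab ybb : H}
    (hxab : (xb, xab) ∈ A.graph) (hxba : (xa, xab) ∈ B.graph) (hxbb : (xb, xbb) ∈ B.graph)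
    (hyab : (yb, yab) ∈ A.graph) (hyba : (ya, yab) ∈ B.graph) (hybb : (yb, ybb) ∈ B.graph) :
    ⟪xa, ybb⟫ = ⟪xbb, ya⟫ :=
  calc ⟪xa, ybb⟫ = ⟪xab, yb⟫ := (hB.inner_eq_of_mem_graph hxba hybb).symm
    _ = ⟪xb, yab⟫ := hA.inner_eq_of_mem_graph hxab hyab
    _ = ⟪xbb, ya⟫ := (hB.inner_eq_of_mem_graph hxbb hyba).symm

theorem IsSymmetricOp.closure (hA : A.IsSymmetricOp) (hc : A.IsClosable) :
    A.closure.IsSymmetricOp := fun x y => by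
  obtain ⟨d, hd⟩ := hc.exists_seq_tendsto x
  obtain ⟨e, he⟩ := hc.exists_seq_tendsto y
  exact tendsto_nhds_unique ((hd.snd_nhds.inner he.fst_nhds).congr fun n => hA (d n) (e n))
    (hd.fst_nhds.inner he.snd_nhds)

theorem IsNonneg.closure (hA : A.IsNonneg) (hc : A.IsClosable) : A.closure.IsNonneg := fun x => by
  obtain ⟨d, hd⟩ := hc.exists_seq_tendsto x
  exact ge_of_tendsto' ((continuous_re.tendsto _).comp (hd.snd_nhds.inner hd.fst_nhds))
    fun n => hA (d n)

def oneAddSmul (N : H →ₗ.[𝕜] H) (t : ℝ) : N.domain →ₗ[𝕜] H :=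
  N.domain.subtype + (t : 𝕜) • N.toFun

@[simp]
theorem oneAddSmul_apply (x : N.domain) : N.oneAddSmul t x = x + (t : 𝕜) • N x :=
  rfl

theorem IsSymmetricOp.inner_oneAddSmul (hN : N.IsSymmetricOp) (x y : N.domain) :
    ⟪N.oneAddSmul t x, (y : H)⟫ = ⟪(x : H), N.oneAddSmul t y⟫ := by
  simp only [oneAddSmul_apply, inner_add_left, inner_add_right, inner_smul_left,
    inner_smul_right, conj_ofReal, hN x y]

theorem IsNonneg.norm_le_norm_oneAddSmul (hN : N.IsNonneg) (ht : 0 ≤ t) (x : N.domain) :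
    ‖(x : H)‖ ≤ ‖N.oneAddSmul t x‖ := by
  have hre : 0 ≤ re ⟪(x : H), (t : 𝕜) • N x⟫ := by
    rw [inner_smul_right, re_ofReal_mul, ← inner_conj_symm, conj_re]
    exact mul_nonneg ht (hN x)
  refine (pow_le_pow_iff_left₀ (norm_nonneg _) (norm_nonneg _) two_ne_zero).mp ?_
  rw [oneAddSmul_apply, @norm_add_sq 𝕜]
  nlinarith [sq_nonneg ‖(t : 𝕜) • N x‖]

theorem IsNonneg.norm_sub_le_norm_oneAddSmul_sub (hN : N.IsNonneg) (ht : 0 ≤ t) (x y : N.domain) :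
    ‖(x : H) - y‖ ≤ ‖N.oneAddSmul t x - N.oneAddSmul t y‖ := by
  have h := hN.norm_le_norm_oneAddSmul ht (x - y)
  rwa [_root_.map_sub, Submodule.coe_sub] at h

theorem IsNonneg.tendsto_rightInverse_oneAddSmul (hN : N.IsNonneg) (hd : Dense (N.domain : Set H))
    {R : ℝ → H → N.domain} (hR : ∀ t > 0, ∀ y, N.oneAddSmul t (R t y) = y) (y : H) :
    Tendsto (fun t => (R t y : H)) (𝓝[>] 0) (𝓝 y) := by
  refine Metric.tendsto_nhds.mpr fun ε hε => ?_
  obtain ⟨z, hz, hyz⟩ := Metric.mem_closure_iff.mp (hd y) (ε / 3) (by positivity)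
  set z' : N.domain := ⟨z, hz⟩
  have hsmall : ∀ᶠ t in 𝓝[>] (0 : ℝ), t * ‖N z'‖ < ε / 3 := by
    refine (tendsto_nhdsWithin_of_tendsto_nhds ?_).eventually_lt_const (by positivity)
    have hc : Continuous fun t : ℝ => t * ‖N z'‖ := by fun_prop
    simpa using hc.tendsto 0
  filter_upwards [hsmall, self_mem_nhdsWithin] with t hts (ht : 0 < t)
  rw [dist_eq_norm] at hyz ⊢
  have hRz : ‖(R t y : H) - z‖ ≤ ‖y - z‖ + t * ‖N z'‖ := by
    calc ‖(R t y : H) - z‖ ≤ ‖y - N.oneAddSmul t z'‖ := by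
          simpa only [hR t ht] using hN.norm_sub_le_norm_oneAddSmul_sub ht.le (R t y) z'
      _ = ‖(y - z) - (t : 𝕜) • N z'‖ := by rw [oneAddSmul_apply, sub_add_eq_sub_sub]
      _ ≤ ‖y - z‖ + t * ‖N z'‖ := by
          refine (norm_sub_le _ _).trans_eq ?_
          rw [norm_smul, norm_ofReal, abs_of_pos ht]
  calc ‖(R t y : H) - y‖ ≤ ‖(R t y : H) - z‖ + ‖z - y‖ := norm_sub_le_norm_sub_add_norm_sub _ _ _
    _ < ε := by rw [norm_sub_rev z]; linarith

variable [CompleteSpace H]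

theorem IsSymmetricOp.isClosable (hA : A.IsSymmetricOp) (hd : Dense (A.domain : Set H)) :
    A.IsClosable :=
  isClosable_iff_exists_closed_extension.mpr
    ⟨A†, adjoint_isClosed hd, IsFormalAdjoint.le_adjoint hd hA⟩

theorem _root_.IsSelfAdjoint.isSymmetricOp (hA : IsSelfAdjoint A) : A.IsSymmetricOp := by
  have h := adjoint_isFormalAdjoint hA.dense_domain
  rwa [isSelfAdjoint_def.mp hA] at h

theorem _root_.IsSelfAdjoint.mem_graph_of_inner (hA : IsSelfAdjoint A) {u v : H}
    (h : ∀ x : A.domain, ⟪v, (x : H)⟫ = ⟪u, A x⟫) : (u, v) ∈ A.graph := by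
  rw [← isSelfAdjoint_def.mp hA, mem_graph_iff]
  exact ⟨⟨u, mem_adjoint_domain_of_exists u ⟨v, h⟩⟩, rfl, adjoint_apply_eq hA.dense_domain _ h⟩

theorem IsNonneg.isClosed_range_oneAddSmul (hN : N.IsNonneg) (hc : N.IsClosed) (ht : 0 < t) :
    _root_.IsClosed (LinearMap.range (N.oneAddSmul t) : Set H) := by
  refine IsSeqClosed.isClosed fun y z hy hz => ?_
  choose x hx using hy
  have hcauchy : CauchySeq fun n => (x n : H) := by
    refine cauchySeq_iff_tendsto_dist_atTop_0.mpr (squeeze_zero (fun _ => dist_nonneg)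
      (fun p => ?_) (cauchySeq_iff_tendsto_dist_atTop_0.mp hz.cauchySeq))
    simpa only [dist_eq_norm, hx] using hN.norm_sub_le_norm_oneAddSmul_sub ht.le (x p.1) (x p.2)
  obtain ⟨u, hu⟩ := cauchySeq_tendsto_of_complete hcauchy
  have ht' : (t : 𝕜) ≠ 0 := ofReal_ne_zero.mpr ht.ne'
  have hNx : Tendsto (fun n => N (x n)) atTop (𝓝 ((t : 𝕜)⁻¹ • (z - u))) := by
    have h : ∀ n, N (x n) = (t : 𝕜)⁻¹ • (y n - x n) := fun n => by
      rw [← hx n, oneAddSmul_apply, add_sub_cancel_left, inv_smul_smul₀ ht']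
    simpa only [h] using (hz.sub hu).const_smul _
  obtain ⟨v, rfl, hv⟩ := N.mem_graph_iff.mp <| hc.mem_of_tendsto (hu.prodMk_nhds hNx)
    (Eventually.of_forall fun n => N.mem_graph (x n))
  refine ⟨v, ?_⟩
  rw [oneAddSmul_apply, hv, smul_inv_smul₀ ht', add_sub_cancel]

theorem _root_.IsSelfAdjoint.surjective_oneAddSmul (hN : IsSelfAdjoint N) (hpos : N.IsNonneg)
    (ht : 0 < t) : Function.Surjective (N.oneAddSmul t) := by
  have := (hpos.isClosed_range_oneAddSmul hN.isClosed ht).completeSpace_coe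
  rw [← LinearMap.range_eq_top, ← Submodule.orthogonal_eq_bot_iff, Submodule.eq_bot_iff]
  intro u hu
  have ht' : (t : 𝕜) ≠ 0 := ofReal_ne_zero.mpr ht.ne'
  have hgraph : (u, -(t : 𝕜)⁻¹ • u) ∈ N.graph := hN.mem_graph_of_inner fun x => by
    have h0 := (Submodule.mem_orthogonal' _ u).mp hu _ (LinearMap.mem_range_self _ x)
    rw [oneAddSmul_apply, inner_add_right, inner_smul_right] at h0
    rw [inner_smul_left, _root_.map_neg, map_inv₀, conj_ofReal]
    field_simp
    linear_combination -h0
  obtain ⟨x, rfl, hx⟩ := N.mem_graph_iff.mp hgraph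
  have h := hpos.norm_le_norm_oneAddSmul ht.le x
  rwa [oneAddSmul_apply, hx, smul_smul, mul_neg, mul_inv_cancel₀ ht', neg_one_smul,
    add_neg_cancel, norm_zero, norm_le_zero_iff] at h

theorem IsSymmetricOp.adjoint_eq_of_commute (hS : S.IsSymmetricOp) (hSc : S.IsClosed)
    (hN : IsSelfAdjoint N) (hNpos : N.IsNonneg) (hNS : N.domain ≤ S.domain)
    (hcomm : ∀ x y : N.domain, ⟪S ⟨x, hNS x.2⟩, N y⟫ = ⟪N x, S ⟨y, hNS y.2⟩⟫) : S† = S := by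
  have hSd : Dense (S.domain : Set H) := hN.dense_domain.mono hNS
  have hSM (t : ℝ) (x y : N.domain) :
      ⟪S ⟨x, hNS x.2⟩, N.oneAddSmul t y⟫ = ⟪N.oneAddSmul t x, S ⟨y, hNS y.2⟩⟫ := by
    simp only [oneAddSmul_apply, inner_add_left, inner_add_right, inner_smul_left,
      inner_smul_right, conj_ofReal, hcomm x y, hS ⟨x, hNS x.2⟩ ⟨y, hNS y.2⟩]
  choose! R hR using fun t (ht : 0 < t) => hN.surjective_oneAddSmul hNpos ht
  refine le_antisymm (le_of_le_graph fun p hp => ?_) (IsFormalAdjoint.le_adjoint hSd hS)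
  obtain ⟨u, rfl⟩ := S†.mem_graph_iff'.mp hp
  have hRS : ∀ t > 0, S ⟨R t u, hNS (R t u).2⟩ = R t (S† u) := fun t ht =>
    ext_inner_right 𝕜 fun z => by
      obtain ⟨y, rfl⟩ := hN.surjective_oneAddSmul hNpos ht z
      calc ⟪S ⟨R t u, hNS (R t u).2⟩, N.oneAddSmul t y⟫
          = ⟪N.oneAddSmul t (R t u), S ⟨y, hNS y.2⟩⟫ := hSM t _ _
        _ = ⟪(u : H), S ⟨y, hNS y.2⟩⟫ := by rw [hR t ht]
        _ = ⟪S† u, y⟫ := (adjoint_isFormalAdjoint hSd u ⟨y, hNS y.2⟩).symm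
        _ = ⟪N.oneAddSmul t (R t (S† u)), y⟫ := by rw [hR t ht]
        _ = ⟪(R t (S† u) : H), N.oneAddSmul t y⟫ := hN.isSymmetricOp.inner_oneAddSmul _ _
  have hlim := (hNpos.tendsto_rightInverse_oneAddSmul hN.dense_domain hR u).prodMk_nhds
    (hNpos.tendsto_rightInverse_oneAddSmul hN.dense_domain hR (S† u))
  refine hSc.mem_of_tendsto hlim (eventually_mem_nhdsWithin.mono fun t ht => ?_)
  rw [← hRS t ht]
  exact S.mem_graph ⟨R t u, hNS (R t u).2⟩

theorem isEssSelfAdjointOp_of_sq_norm_le_of_commute (hT : T.IsSymmetricOp) (hCpos : C.IsNonneg)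
    (hC : C.IsEssSelfAdjointOp) (hCT : C.domain ≤ T.domain) {c : ℝ}
    (hbound : ∀ x : C.domain, ‖T ⟨x, hCT x.2⟩‖ ^ 2 ≤ c * re ⟪C x, (x : H)⟫)
    (hcomm : ∀ x y : C.domain, ⟪T ⟨x, hCT x.2⟩, C y⟫ = ⟪C x, T ⟨y, hCT y.2⟩⟫) :
    T.IsEssSelfAdjointOp := by
  obtain ⟨hCcl, hCdense, hCsa⟩ := hC
  have hTdense : Dense (T.domain : Set H) :=
    (hCcl.dense_domain_of_dense_closure hCdense).mono hCT
  have hTcl : T.IsClosable := hT.isClosable hTdense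
  have hrel (x : C.domain) : ‖T ⟨x, hCT x.2⟩‖ ≤ √|c| * ‖((x : H), C x)‖ :=
    norm_le_sqrt_mul_norm_prod_of_sq_norm_le (hbound x)
  have hdom : C.closure.domain ≤ T.closure.domain := fun x hx => by
    obtain ⟨d, hd⟩ := hCcl.exists_seq_tendsto ⟨x, hx⟩
    exact (hTcl.exists_tendsto_closure_of_norm_le hCT hrel hd).1
  refine ⟨hTcl, hTdense.mono (le_closure T).1, (hT.closure hTcl).adjoint_eq_of_commute
    hTcl.closure_isClosed hCsa (hCpos.closure hCcl) hdom fun x y => ?_⟩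
  obtain ⟨d, hd⟩ := hCcl.exists_seq_tendsto x
  obtain ⟨e, he⟩ := hCcl.exists_seq_tendsto y
  obtain ⟨_, hTd⟩ := hTcl.exists_tendsto_closure_of_norm_le hCT hrel hd
  obtain ⟨_, hTe⟩ := hTcl.exists_tendsto_closure_of_norm_le hCT hrel he
  exact tendsto_nhds_unique ((hTd.inner he.snd_nhds).congr fun n => hcomm (d n) (e n))
    (hd.snd_nhds.inner hTe)

theorem isEssSelfAdjointOp_domRestrict_ofReal_smul_add_ofReal_smul (hA : A.IsSymmetricOp)
    (hB : B.IsSymmetricOp) {𝒟 : Submodule 𝕜 H}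
    (h𝒟A : 𝒟 ≤ A.domain) (h𝒟B : 𝒟 ≤ B.domain)
    (h𝒟AB : 𝒟 ≤ (A.pcomp B).domain) (h𝒟BA : 𝒟 ≤ (B.pcomp A).domain)
    (hcomm : ∀ x : 𝒟, (A.pcomp B) ⟨x.1, h𝒟AB x.2⟩ = (B.pcomp A) ⟨x.1, h𝒟BA x.2⟩)
    (hC : ((A.pcomp A + B.pcomp B).domRestrict 𝒟).IsEssSelfAdjointOp) (a b : ℝ) :
    (((a : 𝕜) • A + (b : 𝕜) • B).domRestrict 𝒟).IsEssSelfAdjointOp := by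
  set C := (A.pcomp A + B.pcomp B).domRestrict 𝒟
  let Ax (x : C.domain) : H := A ⟨x, h𝒟A x.2.1⟩
  let Bx (x : C.domain) : H := B ⟨x, h𝒟B x.2.1⟩
  let AAx (x : C.domain) : H := A.pcomp A ⟨x, x.2.2.1⟩
  let BBx (x : C.domain) : H := B.pcomp B ⟨x, x.2.2.2⟩
  let ABx (x : C.domain) : H := A.pcomp B ⟨x, h𝒟AB x.2.1⟩
  have hAA (x : C.domain) : (Ax x, AAx x) ∈ A.graph :=
    apply_pcomp_mem_graph (A := A) (B := A) ⟨x, x.2.2.1⟩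
  have hBB (x : C.domain) : (Bx x, BBx x) ∈ B.graph :=
    apply_pcomp_mem_graph (A := B) (B := B) ⟨x, x.2.2.2⟩
  have hAB (x : C.domain) : (Bx x, ABx x) ∈ A.graph :=
    apply_pcomp_mem_graph (A := A) (B := B) ⟨x, h𝒟AB x.2.1⟩
  have hBA (x : C.domain) : (Ax x, ABx x) ∈ B.graph := by
    have h := apply_pcomp_mem_graph (A := B) (B := A) ⟨x, h𝒟BA x.2.1⟩
    rwa [← hcomm ⟨x, x.2.1⟩] at h
  refine isEssSelfAdjointOp_of_sq_norm_le_of_commute (c := a ^ 2 + b ^ 2)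
    (((hA.ofReal_smul a).add (hB.ofReal_smul b)).domRestrict 𝒟)
    ((hA.isNonneg_pcomp_self.add hB.isNonneg_pcomp_self).domRestrict 𝒟) hC
    (fun x hx => ⟨hx.1, h𝒟A hx.1, h𝒟B hx.1⟩) (fun x => ?_) (fun x y => ?_)
  · show ‖(a : 𝕜) • Ax x + (b : 𝕜) • Bx x‖ ^ 2 ≤ (a ^ 2 + b ^ 2) * re ⟪AAx x + BBx x, (x : H)⟫
    rw [inner_add_left, _root_.map_add, hA.re_inner_pcomp_self, hB.re_inner_pcomp_self]
    exact norm_ofReal_smul_add_ofReal_smul_sq_le a b _ _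
  · show ⟪(a : 𝕜) • Ax x + (b : 𝕜) • Bx x, AAx y + BBx y⟫
      = ⟪AAx x + BBx x, (a : 𝕜) • Ax y + (b : 𝕜) • Bx y⟫
    have e1 := (hA.inner_eq_of_mem_graph (hAA x) (hAA y)).symm
    have e2 := hA.inner_comm_of_mem_graph hB (hAB x) (hBA x) (hBB x) (hAB y) (hBA y) (hBB y)
    have e3 := hB.inner_comm_of_mem_graph hA (hBA x) (hAB x) (hAA x) (hBA y) (hAB y) (hAA y)
    have e4 := (hB.inner_eq_of_mem_graph (hBB x) (hBB y)).symm
    simp only [inner_add_left, inner_add_right, inner_smul_left, inner_smul_right, conj_ofReal]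
    linear_combination (a : 𝕜) * (e1 + e2) + (b : 𝕜) * (e3 + e4)

end Hilbert

end LinearPMap

theorem nelson_essentially_selfadjoint_general {𝕜 H : Type*} [RCLike 𝕜]
    [NormedAddCommGroup H] [InnerProductSpace 𝕜 H] [CompleteSpace H]
    (A B : H →ₗ.[𝕜] H) (hAsymm : A.IsSymmetricOp) (hBsymm : B.IsSymmetricOp)
    (𝒟 : Submodule 𝕜 H)
    (h𝒟A : 𝒟 ≤ A.domain) (h𝒟B : 𝒟 ≤ B.domain)
    (h𝒟AB : 𝒟 ≤ (A.pcomp B).domain) (h𝒟BA : 𝒟 ≤ (B.pcomp A).domain)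
    (hcomm : ∀ x : 𝒟, (A.pcomp B) ⟨x.1, h𝒟AB x.2⟩ = (B.pcomp A) ⟨x.1, h𝒟BA x.2⟩)
    (hC : ((A.pcomp A + B.pcomp B).domRestrict 𝒟).IsEssSelfAdjointOp) :
    (A.domRestrict 𝒟).IsEssSelfAdjointOp ∧ (B.domRestrict 𝒟).IsEssSelfAdjointOp ∧
      ∀ a b : ℝ, (((a : 𝕜) • A + (b : 𝕜) • B).domRestrict 𝒟).IsEssSelfAdjointOp := by
  have key := isEssSelfAdjointOp_domRestrict_ofReal_smul_add_ofReal_smul hAsymm hBsymm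
    h𝒟A h𝒟B h𝒟AB h𝒟BA hcomm hC
  refine ⟨?_, ?_, key⟩
  · convert key 1 0 using 1
    refine domRestrict_eq_domRestrict h𝒟A (le_inf h𝒟A h𝒟B) fun x => ?_
    show A ⟨x, _⟩ = ((1 : ℝ) : 𝕜) • A ⟨x, _⟩ + ((0 : ℝ) : 𝕜) • B ⟨x, _⟩
    simp
  · convert key 0 1 using 1
    refine domRestrict_eq_domRestrict h𝒟B (le_inf h𝒟A h𝒟B) fun x => ?_
    show B ⟨x, _⟩ = ((0 : ℝ) : 𝕜) • A ⟨x, _⟩ + ((1 : ℝ) : 𝕜) • B ⟨x, _⟩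
    simp

/-- **Corollary (Nelson).** Let `A, B` be symmetric operators in a Hilbert space `H` and
let `𝒟` be a dense subspace contained in the domains of `A`, `B`, `AB`, `BA`, `A²` and
`B²`, on which `A B x = B A x`. If the restriction of `A² + B²` to `𝒟` is essentially
selfadjoint, then so are the restrictions of `A`, `B`, and of `a A + b B` for all real
`a, b`, to `𝒟`. -/
theorem nelson_essentially_selfadjoint {𝕜 H : Type*} [RCLike 𝕜]
    [NormedAddCommGroup H] [InnerProductSpace 𝕜 H] [CompleteSpace H]
    (A B : H →ₗ.[𝕜] H) (hAsymm : A.IsSymmetricOp) (hBsymm : B.IsSymmetricOp)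
    (𝒟 : Submodule 𝕜 H) (hdense : Dense (𝒟 : Set H))
    (h𝒟A : 𝒟 ≤ A.domain) (h𝒟B : 𝒟 ≤ B.domain)
    (h𝒟AB : 𝒟 ≤ (A.pcomp B).domain) (h𝒟BA : 𝒟 ≤ (B.pcomp A).domain)
    (h𝒟AA : 𝒟 ≤ (A.pcomp A).domain) (h𝒟BB : 𝒟 ≤ (B.pcomp B).domain)
    (hcomm : ∀ x : 𝒟, (A.pcomp B) ⟨x.1, h𝒟AB x.2⟩ = (B.pcomp A) ⟨x.1, h𝒟BA x.2⟩)
    (hC : ((A.pcomp A + B.pcomp B).domRestrict 𝒟).IsEssSelfAdjointOp) :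
    (A.domRestrict 𝒟).IsEssSelfAdjointOp ∧ (B.domRestrict 𝒟).IsEssSelfAdjointOp ∧
      ∀ a b : ℝ, (((a : 𝕜) • A + (b : 𝕜) • B).domRestrict 𝒟).IsEssSelfAdjointOp :=
  nelson_essentially_selfadjoint_general A B hAsymm hBsymm 𝒟 h𝒟A h𝒟B h𝒟AB h𝒟BA hcomm hC
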